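/- There is an absolute constant C > 0 with the following property. Let f, g, h : Ω → ℝ be C¹ functions such that f, g, ∂₂g, h, ∂₁h are square integrable on Ω and h has zero horizontal average, i.e. ∫_T h(x,y) dx = 0 for every y ∈ ℝ. Then ∫_Ω |f(x,y) g(x,y) h(x,y)| dx dy ≤ C ‖f‖_{L²(Ω)} ‖g‖_{L²(Ω)}^{1/2} ‖∂₂g‖_{L²(Ω)}^{1/2} ‖h‖_{L²(Ω)}^{1/2} ‖∂₁h‖_{L²(Ω)}^{1/2}. -/

import Mathlib

open MeasureTheory Filter

noncomputable section

/-- The spatial domain `Ω = 𝕋 × ℝ` realized as the fundamental domain `(0,1] × ℝ`;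
functions on `Ω` are identified with functions on `ℝ × ℝ` that are `1`-periodic
in the first (horizontal) variable. -/
def OmegaStrip : Set (ℝ × ℝ) := Set.Ioc (0:ℝ) 1 ×ˢ (Set.univ : Set ℝ)

/-- `1`-periodicity in the horizontal variable. -/
def PeriodicX (f : ℝ × ℝ → ℝ) : Prop := ∀ x y : ℝ, f (x + 1, y) = f (x, y)

/-- Horizontal partial derivative `∂₁`. -/
def d1 (f : ℝ × ℝ → ℝ) : ℝ × ℝ → ℝ := fun p => deriv (fun x => f (x, p.2)) p.1

/-- Vertical partial derivative `∂₂`. -/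
def d2 (f : ℝ × ℝ → ℝ) : ℝ × ℝ → ℝ := fun p => deriv (fun y => f (p.1, y)) p.2

/-- Squared `L²(Ω)` norm. -/
def sqL2 (f : ℝ × ℝ → ℝ) : ℝ := ∫ p in OmegaStrip, (f p) ^ 2

/-- `L²(Ω)` norm. -/
def l2norm (f : ℝ × ℝ → ℝ) : ℝ := Real.sqrt (sqL2 f)

/-- Square integrability on `Ω`. -/
def SqInt (f : ℝ × ℝ → ℝ) : Prop := IntegrableOn (fun p => (f p) ^ 2) OmegaStrip

/-- Horizontal average `f̄(y) = ∫_𝕋 f(x,y) dx`. -/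
def avgX (f : ℝ × ℝ → ℝ) (y : ℝ) : ℝ := ∫ x in (0:ℝ)..1, f (x, y)

/-- Oscillation part `f̃ = f − f̄`. -/
def oscX (f : ℝ × ℝ → ℝ) : ℝ × ℝ → ℝ := fun p => f p - avgX f p.2

/-- `L²(𝕋)` norm of the horizontal slice at height `y`. -/
def sliceL2x (f : ℝ × ℝ → ℝ) (y : ℝ) : ℝ := Real.sqrt (∫ x in (0:ℝ)..1, (f (x, y)) ^ 2)

/-!
Integrate first in `x`, then in `y`. At a fixed height `y`, Cauchy–Schwarz in `x` bounds
`∫_𝕋 |fgh|` by `‖f(·,y)‖ ‖g(·,y)‖ sup_x |h(·,y)|`. Both remaining factors are controlled by the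
fundamental theorem of calculus applied to a square, `φ(b)² = φ(a)² + ∫_a^b 2φφ'`, started at a
point where `φ` vanishes or is arbitrarily small:
* vertically, `g(x,·)` is square integrable on `ℝ`, hence arbitrarily small somewhere, so
  `‖g(·,y)‖² ≤ 2 ∫_Ω |g ∂₂g| ≤ 2 ‖g‖ ‖∂₂g‖` uniformly in `y`;
* horizontally, `h(·,y)` has zero mean on the circle, hence a zero, so
  `sup_x |h(x,y)|² ≤ 2 ∫_𝕋 |h ∂₁h|(·,y)`, whose integral over `y` is at most `2 ‖h‖ ‖∂₁h‖`.
Cauchy–Schwarz in `y` then gives the estimate with `C = 2`. All integrals are lower Lebesgue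
integrals, which removes integrability side conditions until the final comparison with the
Bochner integral.
-/

open ENNReal
open scoped Interval

section Holder

variable {α β : Type*} [MeasurableSpace α] [MeasurableSpace β] {μ : Measure α} {ν : Measure β}

theorem sq_lintegral_le_of_sq_le_mul {Φ P Q : α → ℝ≥0∞} (hP : AEMeasurable P μ)
    (hQ : AEMeasurable Q μ) (h : ∀ a, Φ a ^ 2 ≤ P a * Q a) :
    (∫⁻ a, Φ a ∂μ) ^ 2 ≤ (∫⁻ a, P a ∂μ) * ∫⁻ a, Q a ∂μ := by
  have hsqrt : ∀ r : ℝ≥0∞, (r ^ (1 / 2 : ℝ)) ^ (2 : ℝ) = r := fun r => by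
    rw [← ENNReal.rpow_mul]; norm_num
  have hΦ : ∀ a, Φ a ≤ P a ^ (1 / 2 : ℝ) * Q a ^ (1 / 2 : ℝ) := fun a => by
    rw [← ENNReal.mul_rpow_of_nonneg _ _ (by norm_num), ← ENNReal.rpow_le_rpow_iff two_pos,
      hsqrt, ENNReal.rpow_two]
    exact h a
  have holder := ENNReal.lintegral_mul_le_Lp_mul_Lq μ Real.HolderConjugate.two_two
    (hP.pow_const (1 / 2 : ℝ)) (hQ.pow_const (1 / 2 : ℝ))
  simp only [Pi.mul_apply, hsqrt] at holder
  calc (∫⁻ a, Φ a ∂μ) ^ 2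
      ≤ ((∫⁻ a, P a ∂μ) ^ (1 / 2 : ℝ) * (∫⁻ a, Q a ∂μ) ^ (1 / 2 : ℝ)) ^ 2 := by
        gcongr
        exact (lintegral_mono hΦ).trans holder
    _ = (∫⁻ a, P a ∂μ) * ∫⁻ a, Q a ∂μ := by
        rw [← ENNReal.mul_rpow_of_nonneg _ _ (by norm_num), ← ENNReal.rpow_two, hsqrt]

theorem sq_lintegral_prod_mul_mul_le [SFinite μ] [SFinite ν] {F₁ F₂ F₃ : α × β → ℝ≥0∞}
    (h₁ : Measurable F₁) (h₂ : Measurable F₂) (h₃ : Measurable F₃) {A : ℝ≥0∞} {B : β → ℝ≥0∞}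
    (hB : Measurable B) (hA : ∀ y, ∫⁻ x, F₂ (x, y) ^ 2 ∂μ ≤ A)
    (hF₃ : ∀ x y, F₃ (x, y) ^ 2 ≤ B y) :
    (∫⁻ p, F₁ p * F₂ p * F₃ p ∂μ.prod ν) ^ 2
      ≤ (∫⁻ p, F₁ p ^ 2 ∂μ.prod ν) * (A * ∫⁻ y, B y ∂ν) := by
  have hslice : ∀ y, (∫⁻ x, F₁ (x, y) * F₂ (x, y) * F₃ (x, y) ∂μ) ^ 2
      ≤ (∫⁻ x, F₁ (x, y) ^ 2 ∂μ) * (A * B y) := fun y => by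
    have hF₂ : Measurable fun x => F₂ (x, y) ^ 2 := (h₂.comp measurable_prodMk_right).pow_const 2
    calc (∫⁻ x, F₁ (x, y) * F₂ (x, y) * F₃ (x, y) ∂μ) ^ 2
        ≤ (∫⁻ x, F₁ (x, y) ^ 2 ∂μ) * ∫⁻ x, F₂ (x, y) ^ 2 * B y ∂μ := by
          refine sq_lintegral_le_of_sq_le_mul
            ((h₁.comp measurable_prodMk_right).pow_const 2).aemeasurable
            (hF₂.mul_const _).aemeasurable fun x => ?_
          rw [mul_assoc, mul_pow, mul_pow]
          gcongr
          exact hF₃ x y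
      _ ≤ (∫⁻ x, F₁ (x, y) ^ 2 ∂μ) * (A * B y) := by
          rw [lintegral_mul_const _ hF₂]
          gcongr
          exact hA y
  rw [lintegral_prod_symm' (fun p => F₁ p * F₂ p * F₃ p) ((h₁.mul h₂).mul h₃),
    lintegral_prod_symm' (fun p => F₁ p ^ 2) (h₁.pow_const 2), ← lintegral_const_mul _ hB]
  exact sq_lintegral_le_of_sq_le_mul
    (h₁.pow_const 2).lintegral_prod_left'.aemeasurable (hB.const_mul A).aemeasurable hslice

end Holder

theorem enorm_sq_eq_ofReal_sq (r : ℝ) : ‖r‖ₑ ^ 2 = ENNReal.ofReal (r ^ 2) := by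
  rw [Real.enorm_eq_ofReal_abs, ← ENNReal.ofReal_pow (abs_nonneg r), sq_abs]

section Agmon

variable {u u' : ℝ → ℝ}

theorem enorm_sq_le_enorm_sq_add_lintegral_uIoc (hu : ∀ t, HasDerivAt u (u' t) t)
    (hu' : Continuous u') (a b : ℝ) :
    ‖u b‖ₑ ^ 2 ≤ ‖u a‖ₑ ^ 2 + 2 * ∫⁻ t in Ι a b, ‖u t‖ₑ * ‖u' t‖ₑ := by
  have hc : Continuous u := continuous_iff_continuousAt.2 fun t => (hu t).continuousAt
  have hcont : Continuous fun t => 2 * u t * u' t := by fun_prop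
  have hftc : ∫ t in a..b, 2 * u t * u' t = u b ^ 2 - u a ^ 2 :=
    intervalIntegral.integral_eq_sub_of_hasDerivAt
      (fun t _ => by simpa [mul_assoc, mul_comm, mul_left_comm] using (hu t).pow 2)
      (hcont.intervalIntegrable a b)
  have hle : u b ^ 2 ≤ u a ^ 2 + ∫ t in Ι a b, ‖2 * u t * u' t‖ := by
    have := intervalIntegral.norm_integral_le_integral_norm_uIoc (μ := volume)
      (f := fun t => 2 * u t * u' t) (a := a) (b := b)
    rw [hftc, Real.norm_eq_abs] at this
    linarith [le_abs_self (u b ^ 2 - u a ^ 2)]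
  calc ‖u b‖ₑ ^ 2 ≤ ENNReal.ofReal (u a ^ 2 + ∫ t in Ι a b, ‖2 * u t * u' t‖) := by
        rw [enorm_sq_eq_ofReal_sq]; exact ENNReal.ofReal_le_ofReal hle
    _ = ‖u a‖ₑ ^ 2 + 2 * ∫⁻ t in Ι a b, ‖u t‖ₑ * ‖u' t‖ₑ := by
        rw [ENNReal.ofReal_add (sq_nonneg _) (by positivity), enorm_sq_eq_ofReal_sq,
          ofReal_integral_norm_eq_lintegral_enorm (hcont.integrableOn_uIoc),
          ← lintegral_const_mul' _ _ ofNat_ne_top]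
        simp only [enorm_mul, mul_assoc, show ‖(2 : ℝ)‖ₑ = 2 from Real.enorm_natCast 2]

theorem enorm_sq_le_two_mul_lintegral_mul_deriv (hu : ∀ t, HasDerivAt u (u' t) t)
    (hu' : Continuous u') (hu2 : ∫⁻ t, ‖u t‖ₑ ^ 2 ≠ ∞) (y : ℝ) :
    ‖u y‖ₑ ^ 2 ≤ 2 * ∫⁻ t, ‖u t‖ₑ * ‖u' t‖ₑ := by
  have hinf : ⨅ t, ‖u t‖ₑ ^ 2 = 0 := by
    by_contra h
    refine hu2 (eq_top_iff.2 ?_)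
    calc ∞ = ∫⁻ _ : ℝ, ⨅ t, ‖u t‖ₑ ^ 2 := by
          rw [lintegral_const, Real.volume_univ, mul_top h]
      _ ≤ ∫⁻ t, ‖u t‖ₑ ^ 2 := lintegral_mono fun t => iInf_le _ t
  calc ‖u y‖ₑ ^ 2 ≤ ⨅ t, (‖u t‖ₑ ^ 2 + 2 * ∫⁻ s, ‖u s‖ₑ * ‖u' s‖ₑ) :=
        le_iInf fun t => (enorm_sq_le_enorm_sq_add_lintegral_uIoc hu hu' t y).trans <| by
          gcongr; exact Measure.restrict_le_self
    _ = 2 * ∫⁻ t, ‖u t‖ₑ * ‖u' t‖ₑ := by rw [← ENNReal.iInf_add, hinf, zero_add]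

theorem enorm_sq_le_two_mul_setLIntegral_mul_deriv_of_periodic {T : ℝ} (hT : 0 < T)
    (hu : ∀ t, HasDerivAt u (u' t) t) (hu' : Continuous u') (hper : Function.Periodic u T)
    (hmean : ∫ t in 0..T, u t = 0) (x : ℝ) :
    ‖u x‖ₑ ^ 2 ≤ 2 * ∫⁻ t in Set.Ioc 0 T, ‖u t‖ₑ * ‖u' t‖ₑ := by
  have hc : Continuous u := continuous_iff_continuousAt.2 fun t => (hu t).continuousAt
  obtain ⟨x₀, hx₀, hux₀⟩ := exists_eq_interval_average hT.ne hc.continuousOn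
  rw [interval_average_eq_div, hmean, zero_div] at hux₀
  rw [Set.uIoo_of_le hT.le] at hx₀
  obtain ⟨y, hy, huy⟩ := hper.exists_mem_Ico₀ hT x
  have hsub : Ι x₀ y ⊆ Set.Ioc 0 T :=
    Set.Ioc_subset_Ioc (le_min hx₀.1.le hy.1) (max_le hx₀.2.le hy.2.le)
  calc ‖u x‖ₑ ^ 2 ≤ ‖u x₀‖ₑ ^ 2 + 2 * ∫⁻ t in Ι x₀ y, ‖u t‖ₑ * ‖u' t‖ₑ := by
        rw [huy]; exact enorm_sq_le_enorm_sq_add_lintegral_uIoc hu hu' x₀ y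
    _ ≤ 2 * ∫⁻ t in Set.Ioc 0 T, ‖u t‖ₑ * ‖u' t‖ₑ := by
        rw [hux₀, enorm_zero, zero_pow two_ne_zero, zero_add]
        gcongr

end Agmon

theorem lintegral_slice_enorm_sq_le {α : Type*} [MeasurableSpace α] {μ : Measure α} [SFinite μ]
    {g g' : α × ℝ → ℝ} (hg : Measurable g) (hg' : Measurable g')
    (hderiv : ∀ x t, HasDerivAt (fun s => g (x, s)) (g' (x, t)) t)
    (hg'c : ∀ x, Continuous fun t => g' (x, t)) (hg2 : ∫⁻ p, ‖g p‖ₑ ^ 2 ∂μ.prod volume ≠ ∞)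
    (y : ℝ) :
    ∫⁻ x, ‖g (x, y)‖ₑ ^ 2 ∂μ ≤ 2 * ∫⁻ p, ‖g p‖ₑ * ‖g' p‖ₑ ∂μ.prod volume := by
  have hgg' : Measurable fun p => ‖g p‖ₑ * ‖g' p‖ₑ := hg.enorm.mul hg'.enorm
  rw [lintegral_prod _ (hg.enorm.pow_const 2).aemeasurable] at hg2
  rw [lintegral_prod _ hgg'.aemeasurable, ← lintegral_const_mul _ hgg'.lintegral_prod_right']
  have hslices : ∀ᵐ x ∂μ, ∫⁻ t, ‖g (x, t)‖ₑ ^ 2 ≠ ∞ :=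
    (ae_lt_top (hg.enorm.pow_const 2).lintegral_prod_right' hg2).mono fun _ hx => hx.ne
  exact lintegral_mono_ae <| hslices.mono fun x hx =>
    enorm_sq_le_two_mul_lintegral_mul_deriv (hderiv x) (hg'c x) hx y

section PartialDerivatives

variable {F : ℝ × ℝ → ℝ}

theorem hasDerivAt_d1 (hF : ContDiff ℝ 1 F) (x y : ℝ) :
    HasDerivAt (fun t => F (t, y)) (d1 F (x, y)) x :=
  ((hF.differentiable one_ne_zero).comp (by fun_prop) x).hasDerivAt

theorem hasDerivAt_d2 (hF : ContDiff ℝ 1 F) (x y : ℝ) :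
    HasDerivAt (fun t => F (x, t)) (d2 F (x, y)) y :=
  ((hF.differentiable one_ne_zero).comp (by fun_prop) y).hasDerivAt

theorem continuous_d1 (hF : ContDiff ℝ 1 F) : Continuous (d1 F) := by
  have : d1 F = fun p => fderiv ℝ F p (1, 0) := funext fun p =>
    (hasDerivAt_d1 hF p.1 p.2).unique <| by
      simpa [Function.comp_def] using
        ((hF.differentiable one_ne_zero) p).hasFDerivAt.comp_hasDerivAt p.1
          ((hasDerivAt_id p.1).prodMk (hasDerivAt_const p.1 p.2))
  rw [this]
  exact (hF.continuous_fderiv one_ne_zero).clm_apply continuous_const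

theorem continuous_d2 (hF : ContDiff ℝ 1 F) : Continuous (d2 F) := by
  have : d2 F = fun p => fderiv ℝ F p (0, 1) := funext fun p =>
    (hasDerivAt_d2 hF p.1 p.2).unique <| by
      simpa [Function.comp_def] using
        ((hF.differentiable one_ne_zero) p).hasFDerivAt.comp_hasDerivAt p.2
          ((hasDerivAt_const p.2 p.1).prodMk (hasDerivAt_id p.2))
  rw [this]
  exact (hF.continuous_fderiv one_ne_zero).clm_apply continuous_const

end PartialDerivatives

theorem l2norm_nonneg (F : ℝ × ℝ → ℝ) : 0 ≤ l2norm F := Real.sqrt_nonneg _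

theorem volume_restrict_omegaStrip :
    volume.restrict OmegaStrip = (volume.restrict (Set.Ioc (0 : ℝ) 1)).prod volume := by
  rw [OmegaStrip, ← Measure.restrict_univ (μ := (volume : Measure ℝ)), Measure.prod_restrict,
    Measure.volume_eq_prod, Measure.restrict_univ]

theorem lintegral_enorm_sq_eq_ofReal_l2norm_sq {F : ℝ × ℝ → ℝ} (hF : SqInt F) :
    ∫⁻ p in OmegaStrip, ‖F p‖ₑ ^ 2 = ENNReal.ofReal (l2norm F) ^ 2 := by
  have hnn : 0 ≤ sqL2 F := setIntegral_nonneg (measurableSet_Ioc.prod .univ) fun p _ => sq_nonneg _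
  simp_rw [enorm_sq_eq_ofReal_sq]
  rw [← ofReal_integral_eq_lintegral_ofReal hF (.of_forall fun p => sq_nonneg _),
    l2norm, ← ENNReal.ofReal_pow (Real.sqrt_nonneg _), Real.sq_sqrt hnn, sqL2]

theorem lintegral_enorm_mul_le_ofReal_l2norm_mul {F G : ℝ × ℝ → ℝ} (hFm : Measurable F)
    (hGm : Measurable G) (hF : SqInt F) (hG : SqInt G) :
    ∫⁻ p in OmegaStrip, ‖F p‖ₑ * ‖G p‖ₑ
      ≤ ENNReal.ofReal (l2norm F) * ENNReal.ofReal (l2norm G) := by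
  rw [← ENNReal.pow_le_pow_left_iff two_ne_zero, mul_pow,
    ← lintegral_enorm_sq_eq_ofReal_l2norm_sq hF, ← lintegral_enorm_sq_eq_ofReal_l2norm_sq hG]
  exact sq_lintegral_le_of_sq_le_mul (hFm.enorm.pow_const 2).aemeasurable
    (hGm.enorm.pow_const 2).aemeasurable fun p => (mul_pow _ _ 2).le

theorem setLIntegral_slice_enorm_sq_le {g : ℝ × ℝ → ℝ} (hg : ContDiff ℝ 1 g) (hg2 : SqInt g)
    (y : ℝ) :
    ∫⁻ x in Set.Ioc 0 1, ‖g (x, y)‖ₑ ^ 2 ≤ 2 * ∫⁻ p in OmegaStrip, ‖g p‖ₑ * ‖d2 g p‖ₑ := by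
  have hd2 := continuous_d2 hg
  rw [volume_restrict_omegaStrip]
  refine lintegral_slice_enorm_sq_le hg.continuous.measurable hd2.measurable (hasDerivAt_d2 hg)
    (fun x => hd2.comp (by fun_prop)) ?_ y
  rw [← volume_restrict_omegaStrip, lintegral_enorm_sq_eq_ofReal_l2norm_sq hg2]
  exact pow_ne_top ofReal_ne_top

theorem sq_lintegral_omegaStrip_mul_mul_le {f g h : ℝ × ℝ → ℝ} (hf : Continuous f)
    (hg : ContDiff ℝ 1 g) (hh : ContDiff ℝ 1 h) (hph : PeriodicX h) (hg2 : SqInt g)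
    (havg : ∀ y, avgX h y = 0) :
    (∫⁻ p in OmegaStrip, ‖f p‖ₑ * ‖g p‖ₑ * ‖h p‖ₑ) ^ 2
      ≤ (∫⁻ p in OmegaStrip, ‖f p‖ₑ ^ 2) * ((2 * ∫⁻ p in OmegaStrip, ‖g p‖ₑ * ‖d2 g p‖ₑ)
        * (2 * ∫⁻ p in OmegaStrip, ‖h p‖ₑ * ‖d1 h p‖ₑ)) := by
  have hd1 := continuous_d1 hh
  have hhd : Measurable fun p => ‖h p‖ₑ * ‖d1 h p‖ₑ :=
    hh.continuous.measurable.enorm.mul hd1.measurable.enorm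
  have hmixed := sq_lintegral_prod_mul_mul_le (ν := volume) hf.measurable.enorm
    hg.continuous.measurable.enorm hh.continuous.measurable.enorm
    (hhd.lintegral_prod_left'.const_mul 2) (setLIntegral_slice_enorm_sq_le hg hg2)
    fun x y => enorm_sq_le_two_mul_setLIntegral_mul_deriv_of_periodic one_pos
      (fun t => hasDerivAt_d1 hh t y) (hd1.comp (by fun_prop)) (fun t => hph t y) (havg y) x
  rwa [lintegral_const_mul _ hhd.lintegral_prod_left', ← lintegral_prod_symm' _ hhd,
    ← volume_restrict_omegaStrip] at hmixed

theorem ofReal_sq_mul_two_mul_mul_two_mul {a b c d e : ℝ} (ha : 0 ≤ a) (hb : 0 ≤ b) (hc : 0 ≤ c)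
    (hd : 0 ≤ d) (he : 0 ≤ e) :
    ENNReal.ofReal a ^ 2 * (2 * (ENNReal.ofReal b * ENNReal.ofReal c)
      * (2 * (ENNReal.ofReal d * ENNReal.ofReal e)))
      = ENNReal.ofReal (2 * a * √b * √c * √d * √e) ^ 2 := by
  have hR : (2 * a * √b * √c * √d * √e) ^ 2 = a ^ 2 * (2 * (b * c) * (2 * (d * e))) := by
    simp only [mul_pow, Real.sq_sqrt, hb, hc, hd, he]; ring
  rw [← ENNReal.ofReal_pow (by positivity : 0 ≤ 2 * a * √b * √c * √d * √e), hR]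
  simp [ENNReal.ofReal_mul, ENNReal.ofReal_pow, ha, hb, hc, hd, mul_nonneg]

/-- Anisotropic trilinear estimate: there is an absolute constant
`C > 0` such that for all `C¹` functions `f, g, h` on `Ω = 𝕋 × ℝ` with
`f, g, ∂₂g, h, ∂₁h ∈ L²(Ω)` and `h` of zero horizontal average,
`∫_Ω |fgh| ≤ C ‖f‖_{L²} ‖g‖_{L²}^{1/2} ‖∂₂g‖_{L²}^{1/2} ‖h‖_{L²}^{1/2} ‖∂₁h‖_{L²}^{1/2}`. -/
theorem statement5 :
    ∃ C : ℝ, 0 < C ∧ ∀ f g h : ℝ × ℝ → ℝ,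
      ContDiff ℝ 1 f → ContDiff ℝ 1 g → ContDiff ℝ 1 h →
      PeriodicX f → PeriodicX g → PeriodicX h →
      SqInt f → SqInt g → SqInt (d2 g) → SqInt h → SqInt (d1 h) →
      (∀ y : ℝ, avgX h y = 0) →
      (∫ p in OmegaStrip, |f p * g p * h p|) ≤
        C * l2norm f * Real.sqrt (l2norm g) * Real.sqrt (l2norm (d2 g)) *
          Real.sqrt (l2norm h) * Real.sqrt (l2norm (d1 h)) := by
  refine ⟨2, two_pos, fun f g h hf hg hh _ _ hph hf2 hg2 hgd2 hh2 hhd1 havg => ?_⟩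
  have hbound : ∫⁻ p in OmegaStrip, ‖f p‖ₑ * ‖g p‖ₑ * ‖h p‖ₑ ≤ ENNReal.ofReal (2 * l2norm f
      * √(l2norm g) * √(l2norm (d2 g)) * √(l2norm h) * √(l2norm (d1 h))) := by
    rw [← ENNReal.pow_le_pow_left_iff two_ne_zero, ← ofReal_sq_mul_two_mul_mul_two_mul
      (l2norm_nonneg f) (l2norm_nonneg g) (l2norm_nonneg (d2 g)) (l2norm_nonneg h)
      (l2norm_nonneg (d1 h)), ← lintegral_enorm_sq_eq_ofReal_l2norm_sq hf2]
    refine (sq_lintegral_omegaStrip_mul_mul_le hf.continuous hg hh hph hg2 havg).trans ?_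
    gcongr
    · exact lintegral_enorm_mul_le_ofReal_l2norm_mul hg.continuous.measurable
        (continuous_d2 hg).measurable hg2 hgd2
    · exact lintegral_enorm_mul_le_ofReal_l2norm_mul hh.continuous.measurable
        (continuous_d1 hh).measurable hh2 hhd1
  have hfgh : Continuous fun p => f p * g p * h p :=
    (hf.continuous.mul hg.continuous).mul hh.continuous
  simp_rw [← Real.norm_eq_abs]
  rw [integral_norm_eq_lintegral_enorm hfgh.aestronglyMeasurable]
  simp only [enorm_mul]
  have := l2norm_nonneg f
  exact ENNReal.toReal_le_of_le_ofReal (by positivity) hbound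

end
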